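/- arXiv:1809.08765 — 4 statements merged into one kernel-verified Lean document; each statement's English description precedes it below -/
import Mathlib

section
/- For every pair of positive integers (j,k), the number (4π/3)²·(j² + k² + jk) is a Dirichlet eigenvalue of the open equilateral triangle E with vertices (0,0), (1,0), (1/2, √3/2): there exists u : ℝ² → ℝ, twice continuously differentiable on ℝ², vanishing at every point of the boundary of E, not identically zero on E, and satisfying ∂²u/∂x² + ∂²u/∂y² = −(4π/3)²(j² + k² + jk)·u at every point of E. -/
/-- The planar Laplacian `∂²u/∂x² + ∂²u/∂y²` of `u : ℝ × ℝ → ℝ` at a point `p`. -/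
noncomputable def lap2 (u : ℝ × ℝ → ℝ) (p : ℝ × ℝ) : ℝ :=
  deriv (deriv fun x => u (x, p.2)) p.1 + deriv (deriv fun y => u (p.1, y)) p.2

/-- `lam` is a Dirichlet eigenvalue of the bounded open set `Ω ⊆ ℝ²`. -/
def IsDirichletEigenvalue (Ω : Set (ℝ × ℝ)) (lam : ℝ) : Prop :=
  ∃ u : ℝ × ℝ → ℝ,
    ContinuousOn u (closure Ω) ∧
    ContDiffOn ℝ 2 u Ω ∧
    (∀ p ∈ frontier Ω, u p = 0) ∧
    (∃ p ∈ Ω, u p ≠ 0) ∧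
    (∀ p ∈ Ω, lap2 u p = -lam * u p)

/-- The open equilateral triangle with vertices `(0,0)`, `(1,0)`, `(1/2, √3/2)`. -/
noncomputable def equilateralTriangle : Set (ℝ × ℝ) :=
  interior (convexHull ℝ {((0 : ℝ), (0 : ℝ)), ((1 : ℝ), (0 : ℝ)),
    ((1 / 2 : ℝ), (Real.sqrt 3 / 2 : ℝ))})

/-!
Lamé's construction. Superpose six plane waves whose wave vectors form the orbit of one vector
under the symmetry group of the triangle, each with the sign of the corresponding symmetry. Every
plane wave `sin ⟪w, p⟫` satisfies `Δ = -‖w‖²`, and `‖w‖²` is constant on the orbit, so the sum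
is an eigenfunction. The alternating signs make it odd under the reflections in the two sides
through the origin, and, because `j` and `k` are integers, also under the reflection in the third
side up to `2π`-periodicity; so it vanishes on the boundary. At the interior point with skew
coordinates `(s, s)`, `s = 1 / (2 (j + k))`, it equals
`-2 (sin (π j / (j + k)) + sin (π k / (j + k))) < 0`.
-/

open Real

section PlaneWaves

variable {ι : Type*} [Fintype ι]

noncomputable def planeWaveSum (c a b : ι → ℝ) (p : ℝ × ℝ) : ℝ :=
  ∑ i, c i * sin (a i * p.1 + b i * p.2)

theorem contDiff_planeWaveSum (c a b : ι → ℝ) {n : WithTop ℕ∞} :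
    ContDiff ℝ n (planeWaveSum c a b) :=
  ContDiff.sum fun _ _ => contDiff_const.mul <| contDiff_sin.comp <|
    (contDiff_const.mul contDiff_fst).add (contDiff_const.mul contDiff_snd)

theorem deriv_sum_sin (c a C : ι → ℝ) :
    deriv (fun t => ∑ i, c i * sin (a i * t + C i)) =
      fun t => ∑ i, c i * a i * cos (a i * t + C i) := by
  funext t
  refine (HasDerivAt.fun_sum fun i _ => ?_).deriv
  simpa only [mul_comm (a i), mul_assoc, id_eq, one_mul] using
    ((((hasDerivAt_id t).const_mul (a i)).add_const (C i)).sin).const_mul (c i)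

theorem deriv_sum_cos (c a C : ι → ℝ) :
    deriv (fun t => ∑ i, c i * cos (a i * t + C i)) =
      fun t => -∑ i, c i * a i * sin (a i * t + C i) := by
  funext t
  rw [← Finset.sum_neg_distrib]
  refine (HasDerivAt.fun_sum fun i _ => ?_).deriv
  simpa only [mul_comm (a i), mul_assoc, id_eq, one_mul, neg_mul, mul_neg] using
    ((((hasDerivAt_id t).const_mul (a i)).add_const (C i)).cos).const_mul (c i)

theorem deriv_deriv_sum_sin (c a C : ι → ℝ) (t : ℝ) :
    deriv (deriv fun t => ∑ i, c i * sin (a i * t + C i)) t =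
      -∑ i, c i * a i ^ 2 * sin (a i * t + C i) := by
  rw [deriv_sum_sin, deriv_sum_cos (fun i => c i * a i)]
  simp only [sq, mul_assoc]

theorem lap2_planeWaveSum (c a b : ι → ℝ) {lam : ℝ} (h : ∀ i, a i ^ 2 + b i ^ 2 = lam)
    (p : ℝ × ℝ) : lap2 (planeWaveSum c a b) p = -lam * planeWaveSum c a b p := by
  have hy : (fun y => planeWaveSum c a b (p.1, y)) =
      fun y => ∑ i, c i * sin (b i * y + a i * p.1) := by
    simp only [planeWaveSum, add_comm]
  rw [lap2, hy]
  simp only [planeWaveSum, deriv_deriv_sum_sin, Finset.mul_sum]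
  rw [← neg_add, ← Finset.sum_add_distrib, ← Finset.sum_neg_distrib]
  refine Finset.sum_congr rfl fun i _ => ?_
  rw [add_comm (b i * p.2), ← h i]
  ring

end PlaneWaves

section Triangle

/-- Coordinates of `p` in the basis `(1, 0)`, `(1/2, √3/2)`. -/
noncomputable def skewCoord (p : ℝ × ℝ) : ℝ × ℝ :=
  (p.1 - p.2 / √3, 2 * p.2 / √3)

theorem skewCoord_add_smul (p q : ℝ × ℝ) (a b : ℝ) :
    skewCoord (a • p + b • q) = a • skewCoord p + b • skewCoord q := by
  simp only [skewCoord, Prod.fst_add, Prod.snd_add, Prod.smul_fst, Prod.smul_snd, smul_eq_mul,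
    Prod.smul_mk, Prod.mk_add_mk]
  congr 1 <;> ring

theorem skewCoord_fst_smul_add_snd_smul (p : ℝ × ℝ) :
    (skewCoord p).1 • (1, 0) + (skewCoord p).2 • ((1 : ℝ) / 2, √3 / 2) = p := by
  have h3 : √3 ≠ 0 := by positivity
  simp only [skewCoord, Prod.smul_mk, smul_eq_mul, mul_one, mul_zero, Prod.mk_add_mk, zero_add]
  refine Prod.ext ?_ ?_
  · field_simp; ring
  · field_simp

theorem skewCoord_mk (u v : ℝ) : skewCoord (u + v / 2, √3 / 2 * v) = (u, v) := by
  have h3 : √3 ≠ 0 := by positivity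
  simp only [skewCoord, Prod.mk.injEq]
  refine ⟨?_, ?_⟩
  · field_simp; ring
  · field_simp

theorem continuous_skewCoord : Continuous skewCoord := by
  unfold skewCoord; fun_prop

theorem convexHull_eq_preimage_skewCoord :
    convexHull ℝ {((0 : ℝ), (0 : ℝ)), ((1 : ℝ), (0 : ℝ)),
      ((1 / 2 : ℝ), (Real.sqrt 3 / 2 : ℝ))} =
      skewCoord ⁻¹' {q | 0 ≤ q.1 ∧ 0 ≤ q.2 ∧ q.1 + q.2 ≤ 1} := by
  apply subset_antisymm
  · refine convexHull_min ?_ ?_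
    · rintro p (rfl | rfl | rfl)
      · simp [skewCoord]
      · simp [skewCoord]
      · have hapex : skewCoord (1 / 2, √3 / 2) = (0, 1) := by simpa using skewCoord_mk 0 1
        rw [Set.mem_preimage, hapex]
        norm_num
    · intro p hp q hq a b ha hb hab
      simp only [Set.mem_preimage, skewCoord_add_smul, Set.mem_ofPred_eq, Prod.fst_add,
        Prod.snd_add, Prod.smul_fst, Prod.smul_snd, smul_eq_mul] at hp hq ⊢
      obtain ⟨hp₁, hp₂, hp₃⟩ := hp
      obtain ⟨hq₁, hq₂, hq₃⟩ := hq
      refine ⟨by positivity, by positivity, ?_⟩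
      linarith [mul_le_mul_of_nonneg_left hp₃ ha, mul_le_mul_of_nonneg_left hq₃ hb]
  · intro p ⟨hu, hv, huv⟩
    have hmem := (convex_convexHull ℝ {((0 : ℝ), (0 : ℝ)), ((1 : ℝ), (0 : ℝ)),
      ((1 / 2 : ℝ), (Real.sqrt 3 / 2 : ℝ))}).sum_mem (t := Finset.univ)
      (w := ![1 - (skewCoord p).1 - (skewCoord p).2, (skewCoord p).1, (skewCoord p).2])
      (z := ![(0, 0), (1, 0), (1 / 2, √3 / 2)]) ?_ ?_ ?_
    · convert hmem using 1
      simpa [Fin.sum_univ_three] using (skewCoord_fst_smul_add_snd_smul p).symm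
    · intro i _
      fin_cases i <;> simp only [Fin.zero_eta, Fin.mk_one, Fin.reduceFinMk, Matrix.cons_val] <;>
        linarith
    · simp only [Fin.sum_univ_three, Matrix.cons_val]; ring
    · intro i _; fin_cases i <;> exact subset_convexHull ℝ _ (by simp)

theorem mem_equilateralTriangle_of_skewCoord {p : ℝ × ℝ} (hu : 0 < (skewCoord p).1)
    (hv : 0 < (skewCoord p).2) (huv : (skewCoord p).1 + (skewCoord p).2 < 1) :
    p ∈ equilateralTriangle := by
  have hopen : IsOpen {q : ℝ × ℝ | 0 < q.1 ∧ 0 < q.2 ∧ q.1 + q.2 < 1} :=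
    (isOpen_lt continuous_const continuous_fst).inter <|
      (isOpen_lt continuous_const continuous_snd).inter <|
        isOpen_lt (continuous_fst.add continuous_snd) continuous_const
  rw [equilateralTriangle, convexHull_eq_preimage_skewCoord]
  refine interior_maximal (Set.preimage_mono fun q hq => ?_)
    (hopen.preimage continuous_skewCoord) ⟨hu, hv, huv⟩
  exact ⟨hq.1.le, hq.2.1.le, hq.2.2.le⟩

theorem frontier_equilateralTriangle_subset :
    frontier equilateralTriangle ⊆
      skewCoord ⁻¹' {q | q.1 = 0 ∨ q.2 = 0 ∨ q.1 + q.2 = 1} := by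
  intro p hp
  have hclosed : IsClosed {q : ℝ × ℝ | 0 ≤ q.1 ∧ 0 ≤ q.2 ∧ q.1 + q.2 ≤ 1} :=
    (isClosed_le continuous_const continuous_fst).inter <|
      (isClosed_le continuous_const continuous_snd).inter <|
        isClosed_le (continuous_fst.add continuous_snd) continuous_const
  have hclosure : closure equilateralTriangle ⊆
      skewCoord ⁻¹' {q | 0 ≤ q.1 ∧ 0 ≤ q.2 ∧ q.1 + q.2 ≤ 1} := by
    rw [equilateralTriangle, convexHull_eq_preimage_skewCoord]
    exact closure_minimal interior_subset (hclosed.preimage continuous_skewCoord)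
  obtain ⟨hu, hv, huv⟩ := hclosure (frontier_subset_closure hp)
  have hp' : p ∉ equilateralTriangle := by
    rw [equilateralTriangle, isOpen_interior.frontier_eq] at hp
    exact hp.2
  by_contra hne
  simp only [Set.mem_preimage, Set.mem_ofPred_eq, not_or] at hne
  exact hp' (mem_equilateralTriangle_of_skewCoord (hu.lt_of_ne' hne.1) (hv.lt_of_ne' hne.2.1)
    (huv.lt_of_ne hne.2.2))

end Triangle

section LameMode

/- In skew coordinates, the wave vectors `(lameU j k i, lameV j k i)` are the orbit of
`(2j + k, j + 2k)` under the symmetries of the triangle, and `lameSign i` is the determinant of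
the symmetry. -/
noncomputable def lameU (j k : ℝ) : Fin 6 → ℝ :=
  ![2 * j + k, -(j + 2 * k), k - j, 2 * j + k, -(j + 2 * k), k - j]

noncomputable def lameV (j k : ℝ) : Fin 6 → ℝ :=
  ![j + 2 * k, j - k, -(2 * j + k), j - k, -(2 * j + k), j + 2 * k]

noncomputable def lameSign : Fin 6 → ℝ := ![1, 1, 1, -1, -1, -1]

noncomputable def lamePhase (j k : ℝ) (i : Fin 6) (u v : ℝ) : ℝ :=
  2 * π / 3 * (lameU j k i * u + lameV j k i * v)

noncomputable def lameSkew (j k u v : ℝ) : ℝ :=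
  ∑ i, lameSign i * sin (lamePhase j k i u v)

noncomputable def lameMode (j k : ℝ) (p : ℝ × ℝ) : ℝ :=
  lameSkew j k (skewCoord p).1 (skewCoord p).2

theorem lameMode_eq_planeWaveSum (j k : ℝ) :
    lameMode j k = planeWaveSum lameSign (fun i => 2 * π / 3 * lameU j k i)
      (fun i => 2 * π / 3 * (2 * lameV j k i - lameU j k i) / √3) := by
  funext p
  unfold lameMode lameSkew planeWaveSum
  refine Finset.sum_congr rfl fun i _ => ?_
  rw [lamePhase, skewCoord]
  congr 2
  ring

theorem contDiff_lameMode (j k : ℝ) {n : WithTop ℕ∞} : ContDiff ℝ n (lameMode j k) :=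
  lameMode_eq_planeWaveSum j k ▸ contDiff_planeWaveSum _ _ _

theorem lameU_sq_sub_mul_add_sq (j k : ℝ) (i : Fin 6) :
    lameU j k i ^ 2 - lameU j k i * lameV j k i + lameV j k i ^ 2 =
      3 * (j ^ 2 + k ^ 2 + j * k) := by
  fin_cases i <;>
    simp only [lameU, lameV, Fin.zero_eta, Fin.mk_one, Fin.reduceFinMk, Matrix.cons_val] <;> ring

theorem lap2_lameMode (j k : ℝ) (p : ℝ × ℝ) :
    lap2 (lameMode j k) p = -((4 * π / 3) ^ 2 * (j ^ 2 + k ^ 2 + j * k)) * lameMode j k p := by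
  rw [lameMode_eq_planeWaveSum]
  refine lap2_planeWaveSum _ _ _ (fun i => ?_) p
  have h3 : √3 ^ 2 = 3 := sq_sqrt (by norm_num)
  rw [div_pow, h3]
  linear_combination (16 * π ^ 2 / 27) * lameU_sq_sub_mul_add_sq j k i

theorem lameSkew_zero_left (j k v : ℝ) : lameSkew j k 0 v = 0 := by
  simp only [lameSkew, lamePhase, Fin.sum_univ_six, lameSign, lameU, lameV, Matrix.cons_val,
    mul_zero, zero_add]
  ring

theorem lameSkew_zero_right (j k u : ℝ) : lameSkew j k u 0 = 0 := by
  simp only [lameSkew, lamePhase, Fin.sum_univ_six, lameSign, lameU, lameV, Matrix.cons_val,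
    mul_zero, add_zero]
  ring

theorem lameSkew_one_sub (j k : ℤ) (u : ℝ) : lameSkew j k u (1 - u) = 0 := by
  have h₀₄ : lamePhase j k 0 u (1 - u) =
      lamePhase j k 4 u (1 - u) + (j + k : ℤ) * (2 * π) := by
    simp only [lamePhase, lameU, lameV, Matrix.cons_val]; push_cast; ring
  have h₁₅ : lamePhase j k 1 u (1 - u) = lamePhase j k 5 u (1 - u) + (-k : ℤ) * (2 * π) := by
    simp only [lamePhase, lameU, lameV, Matrix.cons_val]; push_cast; ring
  have h₂₃ : lamePhase j k 2 u (1 - u) = lamePhase j k 3 u (1 - u) + (-j : ℤ) * (2 * π) := by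
    simp only [lamePhase, lameU, lameV, Matrix.cons_val]; push_cast; ring
  simp only [lameSkew, Fin.sum_univ_six, h₀₄, h₁₅, h₂₃, sin_add_int_mul_two_pi]
  simp [lameSign]

theorem lameMode_eq_zero_of_mem_frontier (j k : ℤ) {p : ℝ × ℝ}
    (hp : p ∈ frontier equilateralTriangle) : lameMode j k p = 0 := by
  rcases frontier_equilateralTriangle_subset hp with hu | hv | huv
  · rw [lameMode, hu, lameSkew_zero_left]
  · rw [lameMode, hv, lameSkew_zero_right]
  · rw [lameMode, eq_sub_of_add_eq' huv, lameSkew_one_sub]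

theorem lameSkew_diag (j k s : ℝ) :
    lameSkew j k s s =
      2 * (sin (2 * π * (j + k) * s) - sin (2 * π * j * s) - sin (2 * π * k * s)) := by
  simp only [lameSkew, lamePhase, Fin.sum_univ_six, lameU, lameV, lameSign, Matrix.cons_val]
  ring_nf
  simp only [← neg_add', sin_neg]
  ring

theorem exists_mem_equilateralTriangle_lameMode_ne_zero {j k : ℝ} (hj : 0 < j) (hk : 0 < k)
    (hjk : 1 < j + k) : ∃ p ∈ equilateralTriangle, lameMode j k p ≠ 0 := by
  set s := 1 / (2 * (j + k)) with hs
  have hs₀ : 0 < s := by positivity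
  have hs₁ : 2 * s < 1 := by
    rw [hs, mul_one_div, div_lt_one (by positivity)]; linarith
  refine ⟨(s + s / 2, √3 / 2 * s), ?_, ?_⟩
  · exact mem_equilateralTriangle_of_skewCoord (by rw [skewCoord_mk]; exact hs₀)
      (by rw [skewCoord_mk]; exact hs₀) (by rw [skewCoord_mk]; linarith)
  · rw [lameMode, skewCoord_mk, lameSkew_diag]
    have hπ : 2 * π * (j + k) * s = π := by rw [hs]; field_simp
    have hjπ : 0 < 2 * π * j * s := by positivity
    have hkπ : 0 < 2 * π * k * s := by positivity
    have hsin_j := sin_pos_of_pos_of_lt_pi hjπ (by linarith)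
    have hsin_k := sin_pos_of_pos_of_lt_pi hkπ (by linarith)
    rw [hπ, sin_pi]
    linarith

end LameMode

theorem stmt2 (j k : ℕ) (hj : 0 < j) (hk : 0 < k) :
    (∃ u : ℝ × ℝ → ℝ,
      ContDiff ℝ 2 u ∧
      (∀ p ∈ frontier equilateralTriangle, u p = 0) ∧
      (∃ p ∈ equilateralTriangle, u p ≠ 0) ∧
      (∀ p ∈ equilateralTriangle,
        lap2 u p = -((4 * Real.pi / 3) ^ 2 * ((j : ℝ) ^ 2 + (k : ℝ) ^ 2 + j * k)) * u p)) ∧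
    IsDirichletEigenvalue equilateralTriangle
      ((4 * Real.pi / 3) ^ 2 * ((j : ℝ) ^ 2 + (k : ℝ) ^ 2 + j * k)) := by
  have hsmooth : ContDiff ℝ 2 (lameMode j k) := contDiff_lameMode j k
  have hboundary : ∀ p ∈ frontier equilateralTriangle, lameMode j k p = 0 := fun p hp => by
    simpa using lameMode_eq_zero_of_mem_frontier j k hp
  have hne : ∃ p ∈ equilateralTriangle, lameMode j k p ≠ 0 :=
    exists_mem_equilateralTriangle_lameMode_ne_zero (by exact_mod_cast hj) (by exact_mod_cast hk)
      (by norm_cast; omega)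
  have heigen : ∀ p ∈ equilateralTriangle, lap2 (lameMode j k) p =
      -((4 * π / 3) ^ 2 * ((j : ℝ) ^ 2 + (k : ℝ) ^ 2 + j * k)) * lameMode j k p :=
    fun p _ => lap2_lameMode j k p
  exact ⟨⟨_, hsmooth, hboundary, hne, heigen⟩,
    ⟨_, hsmooth.continuous.continuousOn, hsmooth.contDiffOn, hboundary, hne, heigen⟩⟩
end

section
/- The hyperbolic area of the hyperbolic disc of radius R > 0 equals 4π·sinh²(R/2): the integral of the function (x,y) ↦ 1/y² over the Euclidean disc D = {(x,y) ∈ ℝ² : x² + (y − cosh R)² ≤ sinh² R} (which is the hyperbolic disc of radius R about the point (0,1) in the upper half-plane model) equals 2π(cosh R − 1) = 4π·sinh²(R/2). -/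
/-!
Write the disc as the Euclidean disc of centre (0, a) and radius r, where a = cosh R and
r = sinh R, so that a² - r² = 1. By Fubini, integrating 1/y² over the vertical chord above x,
which is [a - s, a + s] with s = √(r² - x²), gives 1/(a - s) - 1/(a + s) = 2s/(a² - r² + x²).
The remaining integral ∫_{-r}^{r} √(r² - x²)/(c² + x²) dx, with c² = a² - r², has an explicit
primitive in terms of arcsin and equals π(a/c - 1).
-/

open MeasureTheory Set Real

theorem setIntegral_prod_eq_integral_setIntegral_preimage_mk {α β E : Type*}
    [MeasurableSpace α] [MeasurableSpace β] [NormedAddCommGroup E] [NormedSpace ℝ E]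
    {μ : Measure α} {ν : Measure β} [SFinite μ] [SFinite ν]
    {D : Set (α × β)} (hD : MeasurableSet D) {f : α × β → E}
    (hf : IntegrableOn f D (μ.prod ν)) :
    ∫ p in D, f p ∂μ.prod ν = ∫ x, ∫ y in Prod.mk x ⁻¹' D, f (x, y) ∂ν ∂μ := by
  rw [← integral_indicator hD, integral_prod _ ((integrable_indicator_iff hD).mpr hf)]
  congr 1 with x
  rw [← integral_indicator (measurable_prodMk_left hD)]
  rfl

theorem integral_Icc_one_div_sq {u v : ℝ} (hu : 0 < u) (huv : u ≤ v) :
    ∫ y in Icc u v, 1 / y ^ 2 = 1 / u - 1 / v := by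
  have h0 : (0 : ℝ) ∉ uIcc u v := by
    rw [uIcc_of_le huv]
    exact fun h => hu.not_ge h.1
  have hzpow (y : ℝ) : 1 / y ^ 2 = y ^ (-2 : ℤ) := by simp [zpow_neg]
  rw [integral_Icc_eq_integral_Ioc, ← intervalIntegral.integral_of_le huv]
  simp only [hzpow]
  rw [integral_zpow (Or.inr ⟨by norm_num, h0⟩)]
  norm_num
  ring

theorem HasDerivAt.arcsin_of_one_sub_sq_eq {f : ℝ → ℝ} {f' q x : ℝ} (hf : HasDerivAt f f' x)
    (hq : 0 < q) (h : 1 - f x ^ 2 = q ^ 2) : HasDerivAt (fun x => arcsin (f x)) (f' / q) x := by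
  have hfx : |f x| < 1 := by
    rw [← sq_lt_one_iff_abs_lt_one]
    nlinarith
  have := (hasDerivAt_arcsin (abs_lt.mp hfx).1.ne' (abs_lt.mp hfx).2.ne).comp x hf
  rwa [h, sqrt_sq hq.le, one_div_mul_eq_div] at this

/- The first arcsin is arctan (a x / (c √(r² - x²))) in disguise, written so that the primitive
stays continuous up to x = ± r. -/
theorem hasDerivAt_primitive_sqrt_sq_sub_sq_div_sq_add_sq {c r x : ℝ} (hc : 0 < c) (hr : 0 < r)
    (hx : x ^ 2 < r ^ 2) :
    HasDerivAt (fun x => √(c ^ 2 + r ^ 2) / c *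
        arcsin (√(c ^ 2 + r ^ 2) * x / (r * √(c ^ 2 + x ^ 2))) - arcsin (x / r))
      (√(r ^ 2 - x ^ 2) / (c ^ 2 + x ^ 2)) x := by
  set a := √(c ^ 2 + r ^ 2)
  have ha : a ^ 2 = c ^ 2 + r ^ 2 := sq_sqrt (by positivity)
  have hT : √(c ^ 2 + x ^ 2) ^ 2 = c ^ 2 + x ^ 2 := sq_sqrt (by positivity)
  have hS0 : 0 < √(r ^ 2 - x ^ 2) := sqrt_pos.mpr (by linarith)
  have hS : √(r ^ 2 - x ^ 2) ^ 2 = r ^ 2 - x ^ 2 := sq_sqrt (by linarith)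
  have hTd : HasDerivAt (fun x => √(c ^ 2 + x ^ 2)) (x / √(c ^ 2 + x ^ 2)) x := by
    refine (((hasDerivAt_pow 2 x).const_add (c ^ 2)).sqrt (by positivity)).congr_deriv ?_
    field_simp
    ring
  have hv : HasDerivAt (fun y => a * y / (r * √(c ^ 2 + y ^ 2)))
      (a * c ^ 2 / (r * √(c ^ 2 + x ^ 2) ^ 3)) x := by
    refine (((hasDerivAt_id' x).const_mul a).fun_div (hTd.const_mul r)
      (by positivity)).congr_deriv ?_
    field_simp
    linear_combination a * hT
  have h1 := hv.arcsin_of_one_sub_sq_eq (q := c * √(r ^ 2 - x ^ 2) / (r * √(c ^ 2 + x ^ 2)))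
    (by positivity) (by field_simp; linear_combination r ^ 2 * hT - x ^ 2 * ha - c ^ 2 * hS)
  have h2 := ((hasDerivAt_id' x).div_const r).arcsin_of_one_sub_sq_eq
    (q := √(r ^ 2 - x ^ 2) / r) (by positivity) (by field_simp; linear_combination -hS)
  refine ((h1.const_mul (a / c)).sub h2).congr_deriv ?_
  field_simp
  linear_combination (c ^ 2 + x ^ 2) * ha - (c ^ 2 + x ^ 2 + √(r ^ 2 - x ^ 2) ^ 2) * hT
    - (c ^ 2 + x ^ 2) * hS

theorem integral_sqrt_sq_sub_sq_div_sq_add_sq {c r : ℝ} (hc : 0 < c) (hr : 0 < r) :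
    ∫ x in -r..r, √(r ^ 2 - x ^ 2) / (c ^ 2 + x ^ 2) = π * (√(c ^ 2 + r ^ 2) / c - 1) := by
  have hprimitive : Continuous fun x => √(c ^ 2 + r ^ 2) / c *
      arcsin (√(c ^ 2 + r ^ 2) * x / (r * √(c ^ 2 + x ^ 2))) - arcsin (x / r) := by
    have hden (x : ℝ) : r * √(c ^ 2 + x ^ 2) ≠ 0 :=
      (mul_pos hr (sqrt_pos.mpr (by positivity))).ne'
    fun_prop (disch := exact hden)
  have hintegrand : Continuous fun x => √(r ^ 2 - x ^ 2) / (c ^ 2 + x ^ 2) := by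
    fun_prop (disch := intro x; positivity)
  rw [intervalIntegral.integral_eq_sub_of_hasDerivAt_of_le (by linarith) hprimitive.continuousOn
    (fun x hx => hasDerivAt_primitive_sqrt_sq_sub_sq_div_sq_add_sq hc hr (sq_lt_sq' hx.1 hx.2))
    (hintegrand.intervalIntegrable _ _)]
  simp only [neg_sq, mul_neg, neg_div, arcsin_neg]
  rw [mul_comm r, div_self (by positivity), div_self hr.ne', arcsin_one]
  ring

def axisDisc (a r : ℝ) : Set (ℝ × ℝ) := {q | q.1 ^ 2 + (q.2 - a) ^ 2 ≤ r ^ 2}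

theorem isCompact_axisDisc (a r : ℝ) : IsCompact (axisDisc a r) := by
  refine (isCompact_closedBall ((0 : ℝ), a) |r|).of_isClosed_subset
    (isClosed_le (by fun_prop) continuous_const) fun q hq => ?_
  change q.1 ^ 2 + (q.2 - a) ^ 2 ≤ r ^ 2 at hq
  rw [Metric.mem_closedBall, Prod.dist_eq, Real.dist_eq, Real.dist_eq, sub_zero]
  exact max_le (sq_le_sq.mp (by nlinarith [sq_nonneg (q.2 - a)]))
    (sq_le_sq.mp (by nlinarith [sq_nonneg q.1]))

theorem sub_le_of_mem_axisDisc {a r : ℝ} {q : ℝ × ℝ} (hq : q ∈ axisDisc a r)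
    (hr : 0 ≤ r) :
    a - r ≤ q.2 := by
  have : (q.2 - a) ^ 2 ≤ r ^ 2 := by
    nlinarith [sq_nonneg q.1, show q.1 ^ 2 + (q.2 - a) ^ 2 ≤ r ^ 2 from hq]
  linarith [abs_le_of_sq_le_sq' this hr]

theorem preimage_mk_axisDisc {a r x : ℝ} (hx : x ^ 2 ≤ r ^ 2) :
    Prod.mk x ⁻¹' axisDisc a r = Icc (a - √(r ^ 2 - x ^ 2)) (a + √(r ^ 2 - x ^ 2)) := by
  ext y
  have hs := sq_sqrt (sub_nonneg.mpr hx)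
  rw [mem_Icc, sub_le_comm, ← sub_le_iff_le_add', ← abs_sub_le_iff,
    ← sq_le_sq₀ (abs_nonneg _) (sqrt_nonneg _), sq_abs, hs]
  change x ^ 2 + (y - a) ^ 2 ≤ r ^ 2 ↔ _
  constructor <;> intro h <;> nlinarith

theorem preimage_mk_axisDisc_of_lt {a r x : ℝ} (hx : r ^ 2 < x ^ 2) :
    Prod.mk x ⁻¹' axisDisc a r = ∅ :=
  eq_empty_of_forall_notMem fun y (hy : x ^ 2 + (y - a) ^ 2 ≤ r ^ 2) => by
    nlinarith [sq_nonneg (y - a)]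

theorem integral_preimage_mk_axisDisc {a r : ℝ} (hr : 0 ≤ r) (hra : r < a) (x : ℝ) :
    ∫ y in Prod.mk x ⁻¹' axisDisc a r, 1 / y ^ 2 =
      2 * √(r ^ 2 - x ^ 2) / (a ^ 2 - r ^ 2 + x ^ 2) := by
  rcases le_or_gt (x ^ 2) (r ^ 2) with hx | hx
  · have hs0 := sqrt_nonneg (r ^ 2 - x ^ 2)
    have hs : √(r ^ 2 - x ^ 2) ^ 2 = r ^ 2 - x ^ 2 := sq_sqrt (sub_nonneg.mpr hx)
    have hsr : √(r ^ 2 - x ^ 2) ≤ r := sqrt_le_iff.mpr ⟨hr, by nlinarith⟩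
    rw [preimage_mk_axisDisc hx, integral_Icc_one_div_sq (by linarith) (by linarith)]
    set s := √(r ^ 2 - x ^ 2)
    have hpos : 0 < a ^ 2 - r ^ 2 + x ^ 2 := by nlinarith
    field_simp [show a - s ≠ 0 by linarith, show a + s ≠ 0 by linarith]
    linear_combination 2 * s * hs
  · rw [preimage_mk_axisDisc_of_lt hx, setIntegral_empty, sqrt_eq_zero'.mpr (by linarith)]
    simp

theorem integral_one_div_sq_axisDisc {a r : ℝ} (hr : 0 < r) (hra : r < a) :
    ∫ p in axisDisc a r, 1 / p.2 ^ 2 = 2 * π * (a / √(a ^ 2 - r ^ 2) - 1) := by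
  have hD : MeasurableSet (axisDisc a r) := (isCompact_axisDisc a r).isClosed.measurableSet
  have hint : IntegrableOn (fun p : ℝ × ℝ => 1 / p.2 ^ 2) (axisDisc a r) := by
    refine ContinuousOn.integrableOn_compact (isCompact_axisDisc a r) ?_
    refine continuousOn_const.div (by fun_prop) fun q hq => ?_
    exact pow_ne_zero 2 (by linarith [sub_le_of_mem_axisDisc hq hr.le])
  set c := √(a ^ 2 - r ^ 2)
  have hc0 : 0 < c := sqrt_pos.mpr (by nlinarith)
  have hc : c ^ 2 = a ^ 2 - r ^ 2 := sq_sqrt (by nlinarith)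
  have hvanish : ∀ x ∉ Icc (-r) r, 2 * √(r ^ 2 - x ^ 2) / (c ^ 2 + x ^ 2) = 0 := by
    intro x hx
    have : r ^ 2 < x ^ 2 := by
      rw [mem_Icc, not_and_or, not_le, not_le] at hx
      rcases hx with hx | hx <;> nlinarith
    rw [sqrt_eq_zero'.mpr (by linarith), mul_zero, zero_div]
  rw [Measure.volume_eq_prod, setIntegral_prod_eq_integral_setIntegral_preimage_mk hD hint]
  simp only [integral_preimage_mk_axisDisc hr.le hra, ← hc]
  rw [← setIntegral_eq_integral_of_forall_compl_eq_zero hvanish, integral_Icc_eq_integral_Ioc,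
    ← intervalIntegral.integral_of_le (by linarith)]
  simp only [mul_div_assoc, intervalIntegral.integral_const_mul]
  rw [integral_sqrt_sq_sub_sq_div_sq_add_sq hc0 hr, hc, sub_add_cancel, sqrt_sq (by linarith)]
  ring

theorem stmt8 (R : ℝ) (hR : 0 < R) :
    (∫ p in {q : ℝ × ℝ | q.1 ^ 2 + (q.2 - Real.cosh R) ^ 2 ≤ Real.sinh R ^ 2},
        1 / p.2 ^ 2) = 2 * Real.pi * (Real.cosh R - 1) ∧
    2 * Real.pi * (Real.cosh R - 1) = 4 * Real.pi * Real.sinh (R / 2) ^ 2 := by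
  have hcosh : cosh R - 1 = 2 * sinh (R / 2) ^ 2 := by
    have h := cosh_two_mul (R / 2)
    rw [two_mul, add_halves, cosh_sq] at h
    linarith
  refine ⟨?_, by rw [hcosh]; ring⟩
  have h := integral_one_div_sq_axisDisc (sinh_pos_iff.mpr hR) (sinh_lt_cosh R)
  rwa [cosh_sq_sub_sinh_sq, sqrt_one, div_one] at h
end

section
/- For every integer n ≥ 1, the real vector space of harmonic polynomials p ∈ ℝ[x,y,z] that are homogeneous of degree n and vanish identically on the plane z = 0 (i.e., p(x,y,0) = 0 for all x,y ∈ ℝ) has dimension n. -/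
/-!
A harmonic polynomial is determined by its Cauchy data on the plane `z = 0`. If
`p = z ^ (m + 2) * g`, then `Δ p = z ^ m * ((m + 2)(m + 1) g + z * (…))`, so `Δ p = 0` forces
`z ∣ g`; by induction, `Δ p = 0` and `z² ∣ p` give `p = 0`. A `p` in our space vanishes on the
plane, so it is determined by its coefficients at `z x ^ a y ^ (n - 1 - a)`, `a < n`. Conversely,
each binary form `q` of degree `n - 1` arises from the harmonic polynomial
`∑ⱼ (-1) ^ j z ^ (2j + 1) Δ ^ j q / (2j + 1)!` (formally `sin (z √Δ) / √Δ q`; the sum is finite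
since `Δ` lowers degrees by two).
-/

open MvPolynomial

/-- The polynomial Laplacian `∂²/∂x² + ∂²/∂y² + ∂²/∂z²` on `ℝ[x,y,z]`, as a linear map. -/
noncomputable def polyLap : MvPolynomial (Fin 3) ℝ →ₗ[ℝ] MvPolynomial (Fin 3) ℝ :=
  ∑ i : Fin 3, ((pderiv i).toLinearMap ∘ₗ (pderiv i).toLinearMap)

/-- Evaluation of a polynomial in `ℝ[x,y,z]` on the plane `z = 0`, as a linear map
into functions of `(x,y)`; its kernel consists of the polynomials `p` with
`p(x,y,0) = 0` for all real `x,y`. -/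
noncomputable def evalPlane : MvPolynomial (Fin 3) ℝ →ₗ[ℝ] (ℝ × ℝ → ℝ) where
  toFun p := fun q => eval ![q.1, q.2, 0] p
  map_add' p q := by funext; simp
  map_smul' r p := by funext; simp [smul_eval]

namespace MvPolynomial

variable {σ R : Type*}

section CommSemiring

variable [CommSemiring R]

theorem X_pow_dvd_iff_coeff {i : σ} {k : ℕ} {p : MvPolynomial σ R} :
    X i ^ k ∣ p ↔ ∀ d : σ →₀ ℕ, d i < k → coeff d p = 0 := by
  classical
  constructor
  · rintro ⟨g, rfl⟩ d hd
    rw [X_pow_eq_monomial, coeff_monomial_mul', if_neg (by rwa [Finsupp.single_le_iff, not_le])]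
  · intro h
    rw [p.as_sum]
    refine Finset.dvd_sum fun d hd => ?_
    rw [X_pow_eq_monomial, monomial_dvd_monomial]
    refine ⟨Or.inr (Finsupp.single_le_iff.mpr ?_), one_dvd _⟩
    by_contra! hlt
    exact mem_support_iff.mp hd (h d hlt)

theorem eq_zero_of_forall_X_pow_dvd {i : σ} {p : MvPolynomial σ R} (h : ∀ k, X i ^ k ∣ p) :
    p = 0 := by
  ext d
  exact X_pow_dvd_iff_coeff.mp (h (d i + 1)) d (Nat.lt_succ_self _)

theorem IsHomogeneous.pderiv_eq_zero {p : MvPolynomial σ R} (h : p.IsHomogeneous 0) (i : σ) :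
    pderiv i p = 0 := by
  rw [← totalDegree_zero_iff_isHomogeneous, totalDegree_eq_zero_iff_eq_C] at h
  rw [h, pderiv_C]

theorem pderiv_pderiv_comm (i j : σ) (p : MvPolynomial σ R) :
    pderiv i (pderiv j p) = pderiv j (pderiv i p) := by
  classical
  ext m
  simp only [coeff_pderiv, add_right_comm m (Finsupp.single i 1)]
  by_cases hij : i = j
  · subst hij; rfl
  · simp [hij, Ne.symm hij]
    ring

end CommSemiring

section CommRing

variable [CommRing R]

theorem X_dvd_sub_bind₁_update [DecidableEq σ] (i : σ) (p : MvPolynomial σ R) :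
    X i ∣ p - bind₁ (Function.update X i 0) p := by
  set I := Ideal.span {(X i : MvPolynomial σ R)}
  have h : (Ideal.Quotient.mkₐ R I).comp (bind₁ (Function.update X i 0)) =
      Ideal.Quotient.mkₐ R I := by
    refine algHom_ext fun j => ?_
    rcases eq_or_ne j i with rfl | hj
    · simp [I]
    · simp [hj]
  rw [← Ideal.mem_span_singleton, ← Ideal.Quotient.eq]
  exact (congrArg (· p) h).symm

theorem X_dvd_of_forall_eval_eq_zero [IsDomain R] [Infinite R] {i : σ} {p : MvPolynomial σ R}
    (h : ∀ x : σ → R, x i = 0 → eval x p = 0) : X i ∣ p := by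
  classical
  have hsub : bind₁ (Function.update X i 0) p = 0 := funext fun x => by
    have hx : (fun j => eval x (Function.update X i 0 j)) = Function.update x i 0 := by
      ext j
      rcases eq_or_ne j i with rfl | hj <;> simp [*]
    calc eval x (bind₁ (Function.update X i 0) p)
        _ = eval (fun j => eval x (Function.update X i 0 j)) p := eval₂Hom_bind₁ _ _ _ _
        _ = eval x 0 := by rw [hx, h _ (Function.update_self ..), map_zero]
  simpa [hsub] using X_dvd_sub_bind₁_update i p

end CommRing

end MvPolynomial

section Laplacian

variable {p : MvPolynomial (Fin 3) ℝ}

theorem polyLap_apply (p : MvPolynomial (Fin 3) ℝ) :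
    polyLap p = ∑ i, pderiv i (pderiv i p) := by
  simp [polyLap]

theorem polyLap_C_mul (c : ℝ) (p : MvPolynomial (Fin 3) ℝ) :
    polyLap (C c * p) = C c * polyLap p := by
  rw [← smul_eq_C_mul, map_smul, smul_eq_C_mul]

theorem pderiv_iterate_polyLap (i : Fin 3) (j : ℕ) (p : MvPolynomial (Fin 3) ℝ) :
    pderiv i (polyLap^[j] p) = polyLap^[j] (pderiv i p) := by
  induction j with
  | zero => rfl
  | succ j ih =>
    simp only [Function.iterate_succ_apply', ← ih, polyLap_apply, map_sum, pderiv_pderiv_comm i]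

theorem isHomogeneous_polyLap {m : ℕ} (h : p.IsHomogeneous m) :
    (polyLap p).IsHomogeneous (m - 2) := by
  rw [polyLap_apply]
  exact IsHomogeneous.sum _ _ _ fun i _ => by simpa [Nat.sub_sub] using h.pderiv.pderiv (i := i)

theorem polyLap_eq_zero_of_isHomogeneous {m : ℕ} (h : p.IsHomogeneous m) (hm : m < 2) :
    polyLap p = 0 := by
  rw [polyLap_apply]
  refine Finset.sum_eq_zero fun i _ => IsHomogeneous.pderiv_eq_zero ?_ i
  simpa [show m - 1 = 0 by omega] using h.pderiv (i := i)

theorem isHomogeneous_iterate_polyLap {d : ℕ} (h : p.IsHomogeneous d) (j : ℕ) :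
    (polyLap^[j] p).IsHomogeneous (d - 2 * j) := by
  induction j with
  | zero => simpa using h
  | succ j ih =>
    rw [Function.iterate_succ_apply', show d - 2 * (j + 1) = d - 2 * j - 2 by omega]
    exact isHomogeneous_polyLap ih

theorem iterate_polyLap_eq_zero {d j : ℕ} (h : p.IsHomogeneous d) (hj : d < 2 * j) :
    polyLap^[j] p = 0 := by
  obtain ⟨j, rfl⟩ : ∃ k, j = k + 1 := ⟨j - 1, by omega⟩
  rw [Function.iterate_succ_apply']
  exact polyLap_eq_zero_of_isHomogeneous (isHomogeneous_iterate_polyLap h j) (by omega)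

theorem polyLap_X_pow_mul (k : ℕ) (p : MvPolynomial (Fin 3) ℝ) :
    polyLap (X 2 ^ k * p) = X 2 ^ k * polyLap p
      + ((2 * k : ℕ) : MvPolynomial (Fin 3) ℝ) * X 2 ^ (k - 1) * pderiv 2 p
      + ((k * (k - 1) : ℕ) : MvPolynomial (Fin 3) ℝ) * X 2 ^ (k - 2) * p := by
  -- the truncated `k - 1` and `k - 2` are harmless: their coefficients vanish when they truncate
  simp [polyLap_apply, Fin.sum_univ_three, Nat.sub_sub]
  ring

theorem X_dvd_of_polyLap_X_pow_mul_eq_zero {m : ℕ} (h : polyLap (X 2 ^ (m + 2) * p) = 0) :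
    X 2 ∣ p := by
  have hfactor : X 2 ^ m * ((((m + 2) * (m + 1) : ℕ) : MvPolynomial (Fin 3) ℝ) * p
      + X 2 * (X 2 * polyLap p + ((2 * (m + 2) : ℕ) : MvPolynomial (Fin 3) ℝ) * pderiv 2 p))
      = 0 := by
    rw [← h, polyLap_X_pow_mul]
    simp only [Nat.add_sub_cancel, show m + 2 - 1 = m + 1 by omega]
    ring
  have hunit : IsUnit (((m + 2) * (m + 1) : ℕ) : MvPolynomial (Fin 3) ℝ) := by
    rw [← map_natCast C]
    exact (isUnit_iff_ne_zero.mpr (by positivity)).map C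
  have hsum := (mul_eq_zero.mp hfactor).resolve_left (pow_ne_zero _ (X_ne_zero 2))
  rw [← hunit.dvd_mul_left, eq_neg_of_add_eq_zero_left hsum]
  exact (dvd_mul_right _ _).neg_right

theorem eq_zero_of_polyLap_eq_zero_of_X_sq_dvd (hΔ : polyLap p = 0) (h : X 2 ^ 2 ∣ p) :
    p = 0 := by
  suffices ∀ m, X 2 ^ (m + 2) ∣ p from
    eq_zero_of_forall_X_pow_dvd fun k => (pow_dvd_pow _ (Nat.le_add_right k 2)).trans (this k)
  intro m
  induction m with
  | zero => exact h
  | succ m ih =>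
    obtain ⟨g, rfl⟩ := ih
    obtain ⟨g, rfl⟩ := X_dvd_of_polyLap_X_pow_mul_eq_zero hΔ
    exact ⟨g, by ring⟩

end Laplacian

section Extension

open Nat

variable {q : MvPolynomial (Fin 3) ℝ}

noncomputable def sinCoeff (j : ℕ) : ℝ := (-1) ^ j / (2 * j + 1)!

theorem sinCoeff_succ_mul (j : ℕ) :
    sinCoeff (j + 1) * ((2 * j + 3) * (2 * j + 2) : ℕ) = -sinCoeff j := by
  have hfact : (2 * (j + 1) + 1)! = (2 * j + 3) * ((2 * j + 2) * (2 * j + 1)!) := by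
    rw [show 2 * (j + 1) + 1 = 2 * j + 1 + 1 + 1 by ring, factorial_succ, factorial_succ]
  rw [sinCoeff, sinCoeff, hfact]
  push_cast
  field_simp
  ring

noncomputable def oddHarmonicExtension (N : ℕ) (q : MvPolynomial (Fin 3) ℝ) :
    MvPolynomial (Fin 3) ℝ :=
  ∑ j ∈ Finset.range N, C (sinCoeff j) * (X 2 ^ (2 * j + 1) * polyLap^[j] q)

theorem polyLap_oddHarmonicExtension_succ (hz : pderiv 2 q = 0) (N : ℕ) :
    polyLap (oddHarmonicExtension (N + 1) q) =
      C (sinCoeff N) * (X 2 ^ (2 * N + 1) * polyLap^[N + 1] q) := by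
  have hzj (j : ℕ) : pderiv 2 (polyLap^[j] q) = 0 := by
    rw [pderiv_iterate_polyLap, hz, iterate_map_zero]
  induction N with
  | zero =>
    rw [oddHarmonicExtension, Finset.sum_range_one, polyLap_C_mul, polyLap_X_pow_mul]
    simp [hz]
  | succ N ih =>
    have hc : C (sinCoeff (N + 1)) * (((2 * N + 3) * (2 * N + 2) : ℕ) : MvPolynomial (Fin 3) ℝ)
        = -C (sinCoeff N) := by
      rw [← map_natCast C, ← map_mul, sinCoeff_succ_mul, map_neg]
    rw [oddHarmonicExtension, Finset.sum_range_succ, map_add, ← oddHarmonicExtension, ih,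
      polyLap_C_mul, polyLap_X_pow_mul, hzj, ← Function.iterate_succ_apply' polyLap,
      show 2 * (N + 1) + 1 - 2 = 2 * N + 1 by omega, show 2 * (N + 1) + 1 - 1 = 2 * N + 2 by omega,
      show 2 * (N + 1) + 1 = 2 * N + 3 by omega]
    linear_combination (X 2 ^ (2 * N + 1) * polyLap^[N + 1] q) * hc

theorem polyLap_oddHarmonicExtension {N : ℕ} (hz : pderiv 2 q = 0)
    (hq : q.IsHomogeneous (N - 1)) : polyLap (oddHarmonicExtension N q) = 0 := by
  cases N with
  | zero => simp [oddHarmonicExtension]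
  | succ N =>
    rw [polyLap_oddHarmonicExtension_succ hz, iterate_polyLap_eq_zero hq (by omega), mul_zero,
      mul_zero]

theorem isHomogeneous_oddHarmonicExtension {n : ℕ} (hq : q.IsHomogeneous (n - 1)) :
    (oddHarmonicExtension n q).IsHomogeneous n := by
  refine IsHomogeneous.sum _ _ _ fun j hj => ?_
  have hjn := Finset.mem_range.mp hj
  by_cases hdeg : 2 * j ≤ n - 1
  · refine IsHomogeneous.C_mul ?_ _
    convert (isHomogeneous_X_pow 2 (2 * j + 1)).mul (isHomogeneous_iterate_polyLap hq j) using 1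
    omega
  · rw [iterate_polyLap_eq_zero hq (by omega), mul_zero, mul_zero]
    exact isHomogeneous_zero _ _ _

theorem X_dvd_oddHarmonicExtension (N : ℕ) (q : MvPolynomial (Fin 3) ℝ) :
    X 2 ∣ oddHarmonicExtension N q :=
  Finset.dvd_sum fun _ _ => ((dvd_pow_self _ (by omega)).mul_right _).mul_left _

theorem coeff_single_add_oddHarmonicExtension {N : ℕ} (hN : 0 < N) {d : Fin 3 →₀ ℕ}
    (hd : d 2 = 0) :
    coeff (Finsupp.single 2 1 + d) (oddHarmonicExtension N q) = coeff d q := by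
  obtain ⟨N, rfl⟩ : ∃ M, N = M + 1 := ⟨N - 1, by omega⟩
  have hhigher : X 2 ^ 2 ∣ ∑ j ∈ Finset.range N,
      C (sinCoeff (j + 1)) * (X 2 ^ (2 * (j + 1) + 1) * polyLap^[j + 1] q) :=
    Finset.dvd_sum fun _ _ => ((pow_dvd_pow _ (by omega)).mul_right _).mul_left _
  rw [oddHarmonicExtension, Finset.sum_range_succ', coeff_add,
    X_pow_dvd_iff_coeff.mp hhigher _ (by simp [hd])]
  simp [sinCoeff, coeff_X_mul]

end Extension

theorem evalPlane_eq_zero_iff {p : MvPolynomial (Fin 3) ℝ} : evalPlane p = 0 ↔ X 2 ∣ p := by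
  constructor
  · refine fun h => X_dvd_of_forall_eval_eq_zero fun x hx => ?_
    have hx : x = ![x 0, x 1, 0] := by
      ext i
      fin_cases i <;> simp [hx]
    rw [hx]
    exact congrFun h (x 0, x 1)
  · rintro ⟨g, rfl⟩
    ext
    simp [evalPlane]

section BinaryForms

variable (n : ℕ)

noncomputable def xyExponent (a : Fin n) : Fin 3 →₀ ℕ :=
  Finsupp.single 0 (a : ℕ) + Finsupp.single 1 (n - 1 - a)

noncomputable def binaryForm (f : Fin n → ℝ) : MvPolynomial (Fin 3) ℝ :=
  ∑ a, monomial (xyExponent n a) (f a)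

noncomputable def zCoeffs : MvPolynomial (Fin 3) ℝ →ₗ[ℝ] Fin n → ℝ :=
  LinearMap.pi fun a => lcoeff ℝ (Finsupp.single 2 1 + xyExponent n a)

variable {n}

theorem xyExponent_two (a : Fin n) : xyExponent n a 2 = 0 := by
  simp [xyExponent]

theorem exists_eq_single_add_xyExponent {d : Fin 3 →₀ ℕ} (hd : d.degree = n) (h2 : d 2 = 1) :
    ∃ a, d = Finsupp.single 2 1 + xyExponent n a := by
  rw [Finsupp.degree_eq_sum, Fin.sum_univ_three] at hd
  refine ⟨⟨d 0, by omega⟩, ?_⟩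
  ext i
  fin_cases i <;> simp [xyExponent] <;> omega

theorem pderiv_two_binaryForm (f : Fin n → ℝ) : pderiv 2 (binaryForm n f) = 0 := by
  simp [binaryForm, pderiv_monomial, xyExponent_two]

theorem isHomogeneous_binaryForm (f : Fin n → ℝ) : (binaryForm n f).IsHomogeneous (n - 1) := by
  refine IsHomogeneous.sum _ _ _ fun a _ => isHomogeneous_monomial _ ?_
  simp [xyExponent, Finsupp.degree_eq_sum, Fin.sum_univ_three]
  omega

theorem xyExponent_injective : Function.Injective (xyExponent n) := fun a b h =>
  Fin.ext (by simpa [xyExponent] using DFunLike.congr_fun h 0)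

theorem coeff_xyExponent_binaryForm (f : Fin n → ℝ) (a : Fin n) :
    coeff (xyExponent n a) (binaryForm n f) = f a := by
  simp [binaryForm, coeff_sum, coeff_monomial, xyExponent_injective.eq_iff]

theorem zCoeffs_oddHarmonicExtension_binaryForm (f : Fin n → ℝ) :
    zCoeffs n (oddHarmonicExtension n (binaryForm n f)) = f := by
  ext a
  rw [zCoeffs, LinearMap.pi_apply, lcoeff_apply,
    coeff_single_add_oddHarmonicExtension a.pos (xyExponent_two a), coeff_xyExponent_binaryForm]

end BinaryForms

theorem eq_zero_of_zCoeffs_eq_zero {n : ℕ} {p : MvPolynomial (Fin 3) ℝ} (hp : p.IsHomogeneous n)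
    (hΔ : polyLap p = 0) (hz : X 2 ∣ p) (hc : zCoeffs n p = 0) : p = 0 := by
  refine eq_zero_of_polyLap_eq_zero_of_X_sq_dvd hΔ (X_pow_dvd_iff_coeff.mpr fun d hd => ?_)
  obtain h0 | h1 : d 2 = 0 ∨ d 2 = 1 := by omega
  · exact X_pow_dvd_iff_coeff.mp (by rwa [pow_one]) d (by omega)
  · by_contra hne
    have hdeg : d.degree = n := by rw [Finsupp.degree_eq_weight_one]; exact hp hne
    obtain ⟨a, rfl⟩ := exists_eq_single_add_xyExponent hdeg h1
    exact hne (congrFun hc a)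

theorem stmt12_general (n : ℕ) :
    Module.finrank ℝ
      ↥(homogeneousSubmodule (Fin 3) ℝ n ⊓ LinearMap.ker polyLap ⊓
        LinearMap.ker evalPlane) = n := by
  set V := homogeneousSubmodule (Fin 3) ℝ n ⊓ LinearMap.ker polyLap ⊓ LinearMap.ker evalPlane
  have hinj : Function.Injective ((zCoeffs n).domRestrict V) := by
    rw [← LinearMap.ker_eq_bot, Submodule.eq_bot_iff]
    rintro ⟨p, ⟨hhom, hΔ⟩, hplane⟩ hp
    exact Subtype.ext (eq_zero_of_zCoeffs_eq_zero hhom hΔ (evalPlane_eq_zero_iff.mp hplane) hp)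
  have hsurj : Function.Surjective ((zCoeffs n).domRestrict V) := fun f =>
    ⟨⟨oddHarmonicExtension n (binaryForm n f),
      ⟨isHomogeneous_oddHarmonicExtension (isHomogeneous_binaryForm f),
        polyLap_oddHarmonicExtension (pderiv_two_binaryForm f) (isHomogeneous_binaryForm f)⟩,
      evalPlane_eq_zero_iff.mpr (X_dvd_oddHarmonicExtension _ _)⟩,
      zCoeffs_oddHarmonicExtension_binaryForm f⟩
  rw [(LinearEquiv.ofBijective _ ⟨hinj, hsurj⟩).finrank_eq, Module.finrank_fin_fun]

/-- The space of harmonic polynomials in `ℝ[x,y,z]`, homogeneous of degree `n`,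
vanishing identically on the plane `z = 0`, has dimension `n`. -/
theorem stmt12 (n : ℕ) (hn : 1 ≤ n) :
    Module.finrank ℝ
      ↥(homogeneousSubmodule (Fin 3) ℝ n ⊓ LinearMap.ker polyLap ⊓
        LinearMap.ker evalPlane) = n :=
  stmt12_general n
end

section
/- For every integer i ≥ 1, the real vector space of harmonic polynomials p ∈ ℝ[x,y,z] that are homogeneous of degree 2i+1 and odd in each of the three variables separately (p(−x,y,z) = −p(x,y,z), p(x,−y,z) = −p(x,y,z), p(x,y,−z) = −p(x,y,z) identically) has dimension i. -/
/-!
A harmonic polynomial is determined by its coefficients of `x`-degree `< 2`: if `Δp = 0`, the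
coefficient of `Δp` at `n` expresses the coefficient of `p` at `n + 2e₀` through coefficients of
smaller `x`-degree. Consequently `q ↦ Δ(x² q)` is injective, hence bijective, on the space `V_d`
spanned by the monomials `x^a y^b z^c` with `a, b, c` odd and `a + b + c = d`, so
`Δ : V_{d+2} → V_d` is onto. Writing `(a, b, c) = (2a' + 1, 2b' + 1, 2c' + 1)` gives
`dim V_{2n+1} = (n+1 choose 2)`, and rank–nullity leaves a kernel of dimension
`(i+1 choose 2) - (i choose 2) = i` in degree `2i + 1`.
-/

open MvPolynomial

/-- The linear map `p ↦ (x ↦ p(flipᵢ x) + p(x))`, where `flipᵢ` negates the `i`-th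
coordinate; its kernel consists of the polynomials that are odd in the `i`-th
variable, i.e. satisfy `p(flipᵢ x) = -p(x)` for all `x ∈ ℝ³`. -/
noncomputable def oddDefect (i : Fin 3) :
    MvPolynomial (Fin 3) ℝ →ₗ[ℝ] ((Fin 3 → ℝ) → ℝ) where
  toFun p := fun x => eval (Function.update x i (-(x i))) p + eval x p
  map_add' p q := by funext; simp; ring
  map_smul' r p := by funext; simp [smul_eval]; ring

open Finset

section NegVar

variable {R σ : Type*} [CommRing R] [DecidableEq σ]

theorem aeval_update_neg_X_monomial (j : σ) (m : σ →₀ ℕ) (c : R) :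
    aeval (Function.update X j (-X j)) (monomial m c) = (-1 : R) ^ m j • monomial m c := by
  have hpow (k : σ) : Function.update (X : σ → MvPolynomial σ R) j (-X j) k ^ m k =
      Function.update (fun k => X k ^ m k) j (C ((-1) ^ m j) * X j ^ m j) k := by
    rw [Function.apply_update (fun k (y : MvPolynomial σ R) => y ^ m k), neg_pow, map_pow, map_neg,
      map_one]
  rw [aeval_monomial, monomial_eq, Finsupp.prod, Finsupp.prod, algebraMap_eq, smul_eq_C_mul]
  simp_rw [hpow]
  by_cases hj : j ∈ m.support
  · rw [prod_update_of_mem hj, ← mul_prod_erase _ _ hj, sdiff_singleton_eq_erase]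
    ring
  · rw [prod_update_of_notMem hj, Finsupp.notMem_support_iff.mp hj, pow_zero, map_one, one_mul]

theorem coeff_aeval_update_neg_X (j : σ) (m : σ →₀ ℕ) (p : MvPolynomial σ R) :
    coeff m (aeval (Function.update X j (-X j)) p) = (-1 : R) ^ m j * coeff m p := by
  induction p using MvPolynomial.induction_on' with
  | monomial n c =>
    rw [aeval_update_neg_X_monomial, coeff_smul, coeff_monomial, smul_eq_mul]
    split_ifs with h
    · rw [h]
    · rw [mul_zero, mul_zero]
  | add p q hp hq => rw [map_add, coeff_add, coeff_add, hp, hq, mul_add]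

theorem eval_aeval_update_neg_X (j : σ) (x : σ → R) (p : MvPolynomial σ R) :
    eval x (aeval (Function.update X j (-X j)) p) = eval (Function.update x j (-x j)) p := by
  change aeval x (aeval (Function.update X j (-X j)) p) = aeval (Function.update x j (-x j)) p
  rw [← AlgHom.comp_apply, comp_aeval]
  congr 1
  ext k
  simp only [aeval_X]
  rw [Function.apply_update (fun _ => aeval x)]
  simp

theorem aeval_update_neg_X_add_self_eq_zero_iff [NoZeroDivisors R] [CharZero R] (j : σ)
    (p : MvPolynomial σ R) :
    aeval (Function.update X j (-X j)) p + p = 0 ↔ ∀ m ∈ p.support, Odd (m j) := by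
  simp only [MvPolynomial.ext_iff, coeff_add, coeff_aeval_update_neg_X, coeff_zero,
    mem_support_iff]
  refine forall_congr' fun m => ?_
  rcases Nat.even_or_odd (m j) with h | h
  · simp [h.neg_one_pow, Nat.not_odd_iff_even.mpr h]
  · simp [h.neg_one_pow, h]

end NegVar

theorem oddDefect_apply (j : Fin 3) (p : MvPolynomial (Fin 3) ℝ) (x : Fin 3 → ℝ) :
    oddDefect j p x = eval x (aeval (Function.update X j (-X j)) p + p) := by
  rw [map_add, eval_aeval_update_neg_X]
  rfl

theorem oddDefect_eq_zero_iff (j : Fin 3) (p : MvPolynomial (Fin 3) ℝ) :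
    oddDefect j p = 0 ↔ ∀ m ∈ p.support, Odd (m j) := by
  rw [← aeval_update_neg_X_add_self_eq_zero_iff]
  constructor
  · intro h
    exact MvPolynomial.funext fun x => by rw [← oddDefect_apply, h, map_zero, Pi.zero_apply]
  · intro h
    funext x
    rw [oddDefect_apply, h, map_zero, Pi.zero_apply]

section OddExponents

variable (σ : Type*) [Fintype σ] [DecidableEq σ]

def oddExponents (d : ℕ) : Finset (σ →₀ ℕ) :=
  (univ.finsuppAntidiag d).filter fun m => ∀ j, Odd (m j)

variable {σ}

theorem mem_oddExponents {d : ℕ} {m : σ →₀ ℕ} :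
    m ∈ oddExponents σ d ↔ m.degree = d ∧ ∀ j, Odd (m j) := by
  simp [oddExponents, mem_finsuppAntidiag, Finsupp.degree_eq_sum]

theorem add_single_two_mem_oddExponents_iff {d : ℕ} {m : σ →₀ ℕ} (j : σ) :
    m + Finsupp.single j 2 ∈ oddExponents σ (d + 2) ↔ m ∈ oddExponents σ d := by
  have hodd : ∀ k, Odd ((m + Finsupp.single j 2 : σ →₀ ℕ) k) ↔ Odd (m k) := fun k => by
    rcases eq_or_ne j k with rfl | hjk
    · simp [Nat.odd_add]
    · simp [hjk]
  simp only [mem_oddExponents, map_add, Finsupp.degree_single, hodd, Nat.add_right_cancel_iff]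

theorem oddExponents_eq_empty {d : ℕ} (hd : d < Fintype.card σ) : oddExponents σ d = ∅ := by
  refine eq_empty_of_forall_notMem fun m hm => ?_
  obtain ⟨hdeg, hodd⟩ := mem_oddExponents.mp hm
  have : ∑ _j : σ, 1 ≤ ∑ j, m j := sum_le_sum fun j _ => (hodd j).pos
  rw [← Finsupp.degree_eq_sum, hdeg, sum_const, card_univ, smul_eq_mul, mul_one] at this
  omega

/-- Odd exponents of degree `2k + |σ|` are exactly `2a + 1` with `a` of degree `k`. -/
theorem card_oddExponents (k : ℕ) :
    #(oddExponents σ (2 * k + Fintype.card σ)) = (Fintype.card σ + k - 1).choose k := by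
  rw [← card_univ, ← card_finsuppAntidiag_nat_eq_choose]
  symm
  refine card_nbij' (fun a => Finsupp.equivFunOnFinite.symm fun j => 2 * a j + 1)
    (fun m => Finsupp.equivFunOnFinite.symm fun j => m j / 2) ?_ ?_ ?_ ?_
  · intro a ha
    simp only [mem_coe, mem_finsuppAntidiag, mem_oddExponents, Finsupp.degree_eq_sum] at ha ⊢
    simp only [Finsupp.coe_equivFunOnFinite_symm, sum_add_distrib, ← mul_sum, ha.1, sum_const,
      smul_eq_mul, mul_one, odd_two_mul_add_one, implies_true, and_true]
  · intro m hm
    simp only [mem_coe, mem_finsuppAntidiag, mem_oddExponents, Finsupp.degree_eq_sum] at hm ⊢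
    have hsum : 2 * ∑ j, m j / 2 + #(univ : Finset σ) = 2 * k + #(univ : Finset σ) := by
      rw [← hm.1, mul_sum, card_eq_sum_ones, ← sum_add_distrib]
      exact sum_congr rfl fun j _ => Nat.two_mul_div_two_add_one_of_odd (hm.2 j)
    simp only [Finsupp.coe_equivFunOnFinite_symm, subset_univ, and_true]
    omega
  · intro a _
    ext j
    simp only [Finsupp.coe_equivFunOnFinite_symm]
    omega
  · intro m hm
    ext j
    simp only [Finsupp.coe_equivFunOnFinite_symm]
    exact Nat.two_mul_div_two_add_one_of_odd ((mem_oddExponents.mp hm).2 j)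

end OddExponents

noncomputable def oddHomogeneous (d : ℕ) : Submodule ℝ (MvPolynomial (Fin 3) ℝ) :=
  restrictSupport ℝ ↑(oddExponents (Fin 3) d)

theorem mem_oddHomogeneous {d : ℕ} {p : MvPolynomial (Fin 3) ℝ} :
    p ∈ oddHomogeneous d ↔ ∀ m ∈ p.support, m ∈ oddExponents (Fin 3) d :=
  Iff.rfl

instance (d : ℕ) : FiniteDimensional ℝ (oddHomogeneous d) :=
  Module.Finite.of_basis (basisRestrictSupport ℝ _)

theorem homogeneousSubmodule_inf_ker_oddDefect (d : ℕ) :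
    homogeneousSubmodule (Fin 3) ℝ d ⊓ LinearMap.ker (oddDefect 0) ⊓
      LinearMap.ker (oddDefect 1) ⊓ LinearMap.ker (oddDefect 2) = oddHomogeneous d := by
  ext p
  rw [homogeneousSubmodule_eq_finsupp_supported, mem_oddHomogeneous]
  change p ∈ restrictSupport ℝ _ ⊓ _ ⊓ _ ⊓ _ ↔ _
  simp only [Submodule.mem_inf, LinearMap.mem_ker, oddDefect_eq_zero_iff, mem_restrictSupport_iff,
    Set.subset_def, mem_coe, mem_oddExponents, Set.mem_ofPred_eq, Fin.forall_fin_succ,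
    Fin.succ_zero_eq_one, Fin.succ_one_eq_two, IsEmpty.forall_iff, and_true, forall₂_and,
    and_assoc]

theorem finrank_oddHomogeneous (n : ℕ) :
    Module.finrank ℝ (oddHomogeneous (2 * n + 1)) = (n + 1).choose 2 := by
  rw [oddHomogeneous, Module.finrank_eq_nat_card_basis (basisRestrictSupport ℝ _),
    Nat.card_coe_set_eq, Set.ncard_coe_finset]
  cases n with
  | zero => rw [oddExponents_eq_empty (by simp)]; rfl
  | succ k =>
    rw [show 2 * (k + 1) + 1 = 2 * k + Fintype.card (Fin 3) by simp; ring, card_oddExponents,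
      Fintype.card_fin, show 3 + k - 1 = k + 2 by omega, Nat.choose_symm_add]

theorem coeff_polyLap (p : MvPolynomial (Fin 3) ℝ) (n : Fin 3 →₀ ℕ) :
    coeff n (polyLap p) =
      ∑ j, ((n j + 1) * (n j + 2) : ℝ) * coeff (n + Finsupp.single j 2) p := by
  simp only [polyLap, LinearMap.sum_apply, LinearMap.comp_apply, Derivation.coeFn_coe, coeff_sum]
  refine sum_congr rfl fun j _ => ?_
  rw [coeff_pderiv, coeff_pderiv, add_assoc, ← Finsupp.single_add, Finsupp.add_apply,
    Finsupp.single_eq_same]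
  push_cast
  ring

theorem eq_zero_of_polyLap_eq_zero {p : MvPolynomial (Fin 3) ℝ} (j : Fin 3) (hp : polyLap p = 0)
    (hcoeff : ∀ m : Fin 3 →₀ ℕ, m j < 2 → coeff m p = 0) : p = 0 := by
  suffices ∀ k, ∀ m : Fin 3 →₀ ℕ, m j = k → coeff m p = 0 from
    MvPolynomial.ext _ _ fun m => this _ m rfl
  intro k
  induction k using Nat.strong_induction_on with
  | _ k ih =>
    intro m hmk
    rcases lt_or_ge k 2 with hk | hk
    · exact hcoeff m (hmk ▸ hk)
    obtain ⟨n, rfl⟩ : ∃ n, m = n + Finsupp.single j 2 :=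
      ⟨m - Finsupp.single j 2,
        (tsub_add_cancel_of_le (Finsupp.single_le_iff.mpr (hmk ▸ hk))).symm⟩
    have hnj : n j + 2 = k := by simpa using hmk
    have hlower : ∀ l ∈ univ.erase j,
        ((n l + 1) * (n l + 2) : ℝ) * coeff (n + Finsupp.single l 2) p = 0 := by
      intro l hl
      rw [ih (n j) (by omega) _ (by simp [ne_of_mem_erase hl]), mul_zero]
    have hn := congrArg (coeff n) hp
    rw [coeff_polyLap, coeff_zero, ← add_sum_erase _ _ (mem_univ j), sum_eq_zero hlower,
      add_zero] at hn
    exact (mul_eq_zero.mp hn).resolve_left (by positivity)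

theorem polyLap_mem_oddHomogeneous {d : ℕ} {p : MvPolynomial (Fin 3) ℝ}
    (hp : p ∈ oddHomogeneous (d + 2)) : polyLap p ∈ oddHomogeneous d := by
  rw [mem_oddHomogeneous] at hp ⊢
  intro n hn
  rw [mem_support_iff, coeff_polyLap] at hn
  obtain ⟨j, -, hj⟩ := exists_ne_zero_of_sum_ne_zero hn
  exact (add_single_two_mem_oddExponents_iff j).mp
    (hp _ (mem_support_iff.mpr (right_ne_zero_of_mul hj)))

theorem X_sq_mul_mem_oddHomogeneous (j : Fin 3) {d : ℕ} {q : MvPolynomial (Fin 3) ℝ}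
    (hq : q ∈ oddHomogeneous d) : X j ^ 2 * q ∈ oddHomogeneous (d + 2) := by
  rw [mem_oddHomogeneous] at hq ⊢
  intro m hm
  rw [mem_support_iff, X_pow_eq_monomial, coeff_monomial_mul'] at hm
  split_ifs at hm with hle
  · rw [one_mul] at hm
    rw [← tsub_add_cancel_of_le hle]
    exact (add_single_two_mem_oddExponents_iff j).mpr (hq _ (mem_support_iff.mpr hm))
  · exact absurd rfl hm

theorem eq_zero_of_polyLap_X_sq_mul_eq_zero (j : Fin 3) {q : MvPolynomial (Fin 3) ℝ}
    (hq : polyLap (X j ^ 2 * q) = 0) : q = 0 := by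
  have hx : X j ^ 2 * q = 0 := eq_zero_of_polyLap_eq_zero j hq fun m hm => by
    rw [X_pow_eq_monomial, coeff_monomial_mul', if_neg fun hle => by
      have := hle j; simp only [Finsupp.single_eq_same] at this; omega]
  exact (mul_eq_zero.mp hx).resolve_left (pow_ne_zero 2 (X_ne_zero j))

/-- `q ↦ Δ(x² q)` is an injective endomorphism of the finite-dimensional `oddHomogeneous d`,
hence surjective. -/
theorem map_polyLap_oddHomogeneous (d : ℕ) :
    (oddHomogeneous (d + 2)).map polyLap = oddHomogeneous d := by
  refine le_antisymm (Submodule.map_le_iff_le_comap.mpr fun _ => polyLap_mem_oddHomogeneous) ?_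
  let T : oddHomogeneous d →ₗ[ℝ] oddHomogeneous d :=
    (polyLap ∘ₗ LinearMap.mulLeft ℝ (X 0 ^ 2)).restrict fun q hq => by
      rw [LinearMap.comp_apply, LinearMap.mulLeft_apply]
      exact polyLap_mem_oddHomogeneous (X_sq_mul_mem_oddHomogeneous 0 hq)
  have hT_apply (q : oddHomogeneous d) :
      (T q : MvPolynomial (Fin 3) ℝ) = polyLap (X 0 ^ 2 * (q : MvPolynomial (Fin 3) ℝ)) := rfl
  have hT : Function.Injective T := (injective_iff_map_eq_zero T).mpr fun q hq =>
    Subtype.ext <| eq_zero_of_polyLap_X_sq_mul_eq_zero 0 <| by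
      rw [← hT_apply, hq, ZeroMemClass.coe_zero]
  intro w hw
  obtain ⟨q, hq⟩ := LinearMap.injective_iff_surjective.mp hT ⟨w, hw⟩
  exact ⟨X 0 ^ 2 * (q : MvPolynomial (Fin 3) ℝ), X_sq_mul_mem_oddHomogeneous 0 q.2,
    by rw [← hT_apply, hq]⟩

theorem finrank_inf_ker_polyLap_add_finrank (d : ℕ) :
    Module.finrank ℝ ↥(oddHomogeneous (d + 2) ⊓ LinearMap.ker polyLap) +
      Module.finrank ℝ (oddHomogeneous d) = Module.finrank ℝ (oddHomogeneous (d + 2)) := by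
  have h := (polyLap.domRestrict (oddHomogeneous (d + 2))).finrank_range_add_finrank_ker
  rw [LinearMap.range_domRestrict, map_polyLap_oddHomogeneous, LinearMap.ker_domRestrict,
    (Submodule.equivSubtypeMap _ _).finrank_eq, Submodule.map_comap_subtype] at h
  omega

theorem stmt13_general (i : ℕ) :
    Module.finrank ℝ
      ↥(homogeneousSubmodule (Fin 3) ℝ (2 * i + 1) ⊓ LinearMap.ker polyLap ⊓
        LinearMap.ker (oddDefect 0) ⊓ LinearMap.ker (oddDefect 1) ⊓
        LinearMap.ker (oddDefect 2)) = i := by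
  rw [inf_right_comm _ (LinearMap.ker polyLap), inf_right_comm _ (LinearMap.ker polyLap),
    inf_right_comm _ (LinearMap.ker polyLap), homogeneousSubmodule_inf_ker_oddDefect]
  cases i with
  | zero =>
    exact Nat.le_zero.mp ((Submodule.finrank_mono inf_le_left).trans_eq (finrank_oddHomogeneous 0))
  | succ n =>
    have h := finrank_inf_ker_polyLap_add_finrank (2 * n + 1)
    have hchoose : (n + 1 + 1).choose 2 = (n + 1).choose 2 + (n + 1) := by
      rw [Nat.choose_succ_succ' (n + 1) 1, Nat.choose_one_right, add_comm]
    rw [finrank_oddHomogeneous, show 2 * n + 1 + 2 = 2 * (n + 1) + 1 by ring,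
      finrank_oddHomogeneous, hchoose] at h
    omega

/-- The space of harmonic polynomials in `ℝ[x,y,z]`, homogeneous of degree `2i+1`,
odd in each of the three variables separately, has dimension `i`. -/
theorem stmt13 (i : ℕ) (hi : 1 ≤ i) :
    Module.finrank ℝ
      ↥(homogeneousSubmodule (Fin 3) ℝ (2 * i + 1) ⊓ LinearMap.ker polyLap ⊓
        LinearMap.ker (oddDefect 0) ⊓ LinearMap.ker (oddDefect 1) ⊓
        LinearMap.ker (oddDefect 2)) = i :=
  stmt13_general i
end
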